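/- If x_1, ..., x_n is a d-sequence relative to an R-module M (i.e. (x_1,...,x_{i-1})M :_M x_i x_j = (x_1,...,x_{i-1})M :_M x_j for all 1 ≤ i ≤ j ≤ n), then x_1, ..., x_n is a proper sequence relative to M, i.e. x_{i+1} annihilates the Koszul homology H_j(x_1,...,x_i; M) for all 1 ≤ i < n and j > 0. -/

import Mathlib

noncomputable section

open RingTheory

universe u v

/-- The colon `(N :_M J)` of a submodule by an ideal, as a submodule of `M`. -/
def Submodule.idealColon {R : Type u} [CommRing R] {M : Type v} [AddCommGroup M] [Module R M]
    (N : Submodule R M) (J : Ideal R) : Submodule R M where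
  carrier := {m | ∀ a ∈ J, a • m ∈ N}
  add_mem' := by
    intro a b ha hb c hc
    simpa [smul_add] using N.add_mem (ha c hc) (hb c hc)
  zero_mem' := by intro a _; simp
  smul_mem' := by
    intro r m hm a ha
    rw [smul_comm]
    exact N.smul_mem r (hm a ha)

/-- The saturation `N :_M ⟨J⟩ = ⋃_ℓ (N :_M J^ℓ)`. -/
def Submodule.sat {R : Type u} [CommRing R] {M : Type v} [AddCommGroup M] [Module R M]
    (N : Submodule R M) (J : Ideal R) : Submodule R M :=
  ⨆ ℓ : ℕ, N.idealColon (J ^ ℓ)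

/-- `H^0_J(M)`, the `J`-power torsion submodule of `M`. -/
def tor (R : Type u) [CommRing R] (J : Ideal R) (M : Type v) [AddCommGroup M] [Module R M] :
    Submodule R M :=
  (⊥ : Submodule R M).sat J

/-- Krull dimension of a module, `dim (R / ann M)`. -/
def mdim (R : Type u) [CommRing R] (M : Type v) [AddCommGroup M] [Module R M] : WithBot ℕ∞ :=
  ringKrullDim (R ⧸ Module.annihilator R M)

/-- Length of a module, as the longest chain in its submodule lattice. -/
def elen (R : Type u) [CommRing R] (M : Type v) [AddCommGroup M] [Module R M] : ℕ∞ :=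
  (Order.krullDim (Submodule R M)).unbotD 0

/-- Length of a module as a natural number. -/
def nlen (R : Type u) [CommRing R] (M : Type v) [AddCommGroup M] [Module R M] : ℕ :=
  (elen R M).toNat

/-- The ideal generated by `x_1, …, x_{i}` (the first `i` entries of `x`). -/
def priorIdeal {R : Type u} [CommRing R] {n : ℕ} (x : Fin n → R) (i : ℕ) : Ideal R :=
  Ideal.span (x '' {k : Fin n | (k : ℕ) < i})

/-- `x_1, …, x_n` is a d-sequence relative to `M`:
`(x_1,…,x_{i-1})M :_M x_i x_j = (x_1,…,x_{i-1})M :_M x_j` for all `i ≤ j`. -/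
def IsDSeq {R : Type u} [CommRing R] (M : Type v) [AddCommGroup M] [Module R M]
    {n : ℕ} (x : Fin n → R) : Prop :=
  ∀ i j : Fin n, i ≤ j →
    Submodule.comap (LinearMap.lsmul R M (x i * x j)) (priorIdeal x i • ⊤) =
    Submodule.comap (LinearMap.lsmul R M (x j)) (priorIdeal x i • ⊤)

/-- Degree-`j` term of the Koszul complex of `x_1, …, x_n` with coefficients in `M`. -/
abbrev KC (R : Type u) [CommRing R] (M : Type v) [AddCommGroup M] [Module R M] (n j : ℕ) :
    Type v :=
  {s : Finset (Fin n) // s.card = j} → M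

/-- Koszul sign. -/
def koszulSign {n : ℕ} (T : Finset (Fin n)) (i : Fin n) : ℤ :=
  (-1 : ℤ) ^ (T.filter (fun k => k < i)).card

/-- The Koszul differential `K_{j+1}(x; M) → K_j(x; M)`. -/
def kd (R : Type u) [CommRing R] (M : Type v) [AddCommGroup M] [Module R M]
    {n : ℕ} (x : Fin n → R) (j : ℕ) : KC R M n (j + 1) →ₗ[R] KC R M n j where
  toFun f T := ∑ i : Fin n,
    if h : i ∈ T.val then 0
    else koszulSign T.val i •
      (x i • f ⟨insert i T.val, by rw [Finset.card_insert_of_notMem h, T.property]⟩)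
  map_add' f g := by
    funext T
    show (∑ i : Fin n, (_ : M)) = (∑ i : Fin n, (_ : M)) + (∑ i : Fin n, (_ : M))
    rw [← Finset.sum_add_distrib]
    refine Finset.sum_congr rfl fun i _ => ?_
    by_cases h : i ∈ T.val <;> simp [h, smul_add]
  map_smul' r f := by
    funext T
    show (∑ i : Fin n, (_ : M)) = r • (∑ i : Fin n, (_ : M))
    rw [Finset.smul_sum]
    refine Finset.sum_congr rfl fun i _ => ?_
    by_cases h : i ∈ T.val
    · simp [h]
    · simp only [h, dif_neg, not_false_iff, Pi.smul_apply]
      rw [smul_comm (x i) r, smul_comm (koszulSign T.val i) r]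

/-- The Koszul homology module `H_{j+1}(x; M)` (so `KH M x j` is the `(j+1)`-st homology;
these are exactly the positive-degree Koszul homology modules). -/
abbrev KH (R : Type u) [CommRing R] (M : Type v) [AddCommGroup M] [Module R M]
    {n : ℕ} (x : Fin n → R) (j : ℕ) :=
  LinearMap.ker (kd R M x j) ⧸
    (Submodule.comap (LinearMap.ker (kd R M x j)).subtype (LinearMap.range (kd R M x (j + 1))))

/-- Restriction of `x` to its first `i` entries. -/
def firstk {R : Type u} [CommRing R] {n : ℕ} (x : Fin n → R) (i : ℕ) (h : i ≤ n) :
    Fin i → R :=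
  fun k => x (Fin.castLE h k)

/-- `x` is a proper sequence relative to `M` : `x_{i+1} H_j(x_1,…,x_i; M) = 0`
for `1 ≤ i < n` and `j > 0`. -/
def IsProperSeq {R : Type u} [CommRing R] (M : Type v) [AddCommGroup M] [Module R M]
    {n : ℕ} (x : Fin n → R) : Prop :=
  ∀ i : ℕ, 1 ≤ i → ∀ hi : i < n, ∀ j : ℕ,
    ∀ h : KH R M (firstk x i hi.le) j, x ⟨i, hi⟩ • h = 0

/-- `x` is amenable to `M` : the positive Koszul homology modules have finite length. -/
def IsAmenable (R : Type u) [CommRing R] (M : Type u) [AddCommGroup M] [Module R M]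
    {n : ℕ} (x : Fin n → R) : Prop :=
  ∀ j : ℕ, IsFiniteLength R (KH R M x j)

/-- `x` is a partial system of parameters of `M` : `dim M = n + dim M/(x)M`. -/
def IsPartialSOP (R : Type u) [CommRing R] (M : Type v) [AddCommGroup M] [Module R M]
    {n : ℕ} (x : Fin n → R) : Prop :=
  mdim R M = (n : WithBot ℕ∞) +
    mdim R (M ⧸ (Ideal.span (Set.range x) • ⊤ : Submodule R M))

/-- `x` is a system of parameters of `M`. -/
def IsSOP (R : Type u) [CommRing R] (M : Type v) [AddCommGroup M] [Module R M]
    {n : ℕ} (x : Fin n → R) : Prop :=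
  mdim R M = (n : WithBot ℕ∞) ∧
    IsFiniteLength R (M ⧸ (Ideal.span (Set.range x) • ⊤ : Submodule R M))

/-- There is an `M`-regular sequence of length `k` inside the set `J` (depth `≥ k`). -/
def hasDepthGE (R : Type u) [CommRing R] (J : Set R) (M : Type v) [AddCommGroup M]
    [Module R M] (k : ℕ) : Prop :=
  ∃ y : Fin k → R, (∀ i, y i ∈ J) ∧ RingTheory.Sequence.IsRegular M (List.ofFn y)

/-- The degree-`ℓ` piece `I^ℓ M / I^{ℓ+1} M` of the associated graded module. -/
abbrev grPiece (R : Type u) [CommRing R] (I : Ideal R) (M : Type v) [AddCommGroup M]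
    [Module R M] (ℓ : ℕ) :=
  (I ^ ℓ • ⊤ : Submodule R M) ⧸
    (Submodule.comap (I ^ ℓ • ⊤ : Submodule R M).subtype (I ^ (ℓ + 1) • ⊤ : Submodule R M))

/-- The j-function `n ↦ Σ_{ℓ ≤ n} λ(H^0_J(I^ℓ M / I^{ℓ+1} M))`. -/
def jFun (R : Type u) [CommRing R] (J I : Ideal R) (M : Type v) [AddCommGroup M]
    [Module R M] (n : ℕ) : ℕ :=
  ∑ ℓ ∈ Finset.range (n + 1), nlen R (tor R J (grPiece R I M ℓ))

end

noncomputable section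
namespace DSeqAux

open Finset

variable {R : Type u} [CommRing R] {M : Type v} [AddCommGroup M] [Module R M]

/-- push a finset of `Fin m` into `Fin (m+1)` -/
def up {m : ℕ} (S : Finset (Fin m)) : Finset (Fin (m + 1)) := S.map Fin.castSuccEmb

@[simp] lemma card_up {m : ℕ} (S : Finset (Fin m)) : (up S).card = S.card :=
  Finset.card_map _

@[simp] lemma mem_up {m : ℕ} (S : Finset (Fin m)) (i : Fin m) :
    Fin.castSucc i ∈ up S ↔ i ∈ S := Finset.mem_map' _

lemma last_not_mem_up {m : ℕ} (S : Finset (Fin m)) : Fin.last m ∉ up S := by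
  intro h
  rcases Finset.mem_map.mp h with ⟨a, _, ha⟩
  exact absurd ha (Fin.ne_of_lt (Fin.castSucc_lt_last a))

lemma up_insert {m : ℕ} (S : Finset (Fin m)) (i : Fin m) :
    up (insert i S) = insert (Fin.castSucc i) (up S) := by
  rw [up, up, Finset.map_insert]; rfl

/-- pull back a finset of `Fin (m+1)` to `Fin m` (dropping `last`) -/
def down {m : ℕ} (T : Finset (Fin (m + 1))) : Finset (Fin m) :=
  T.preimage Fin.castSucc (Fin.castSucc_injective m).injOn

@[simp] lemma mem_down {m : ℕ} (T : Finset (Fin (m + 1))) (i : Fin m) :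
    i ∈ down T ↔ Fin.castSucc i ∈ T := Finset.mem_preimage

@[simp] lemma down_up {m : ℕ} (S : Finset (Fin m)) : down (up S) = S := by
  ext i; simp

lemma up_down {m : ℕ} (T : Finset (Fin (m + 1))) (h : Fin.last m ∉ T) :
    up (down T) = T := by
  ext j
  rcases Fin.eq_castSucc_or_eq_last j with ⟨i, rfl⟩ | rfl
  · simp
  · simp [h, last_not_mem_up]

lemma card_down {m : ℕ} (T : Finset (Fin (m + 1))) (h : Fin.last m ∉ T) :
    (down T).card = T.card := by
  conv_rhs => rw [← up_down T h]
  simp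

end DSeqAux
end

noncomputable section
namespace DSeqAux

open Finset

variable {R : Type u} [CommRing R] {M : Type v} [AddCommGroup M] [Module R M]

/-- restriction part -/
def res {m : ℕ} (p : ℕ) (f : KC R M (m + 1) p) : KC R M m p :=
  fun S => f ⟨up S.1, by rw [card_up, S.2]⟩

/-- `last`-component part -/
def hp {m : ℕ} (p : ℕ) (f : KC R M (m + 1) (p + 1)) : KC R M m p :=
  fun S => f ⟨insert (Fin.last m) (up S.1), by
    rw [Finset.card_insert_of_notMem (last_not_mem_up _), card_up, S.2]⟩

/-- assemble from the two parts -/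
def asm {m : ℕ} (p : ℕ) (A : KC R M m (p + 1)) (B : KC R M m p) : KC R M (m + 1) (p + 1) :=
  fun T => if h : Fin.last m ∈ T.1
    then B ⟨down (T.1.erase (Fin.last m)), by
      rw [card_down _ (Finset.notMem_erase _ _), Finset.card_erase_of_mem h, T.2]; rfl⟩
    else A ⟨down T.1, by rw [card_down _ h, T.2]⟩

lemma res_asm {m : ℕ} (p : ℕ) (A : KC R M m (p + 1)) (B : KC R M m p) :
    res (p + 1) (asm p A B) = A := by
  funext S
  show asm p A B _ = _
  rw [asm, dif_neg (last_not_mem_up _)]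
  congr 1
  exact Subtype.ext (down_up S.1)

lemma hp_asm {m : ℕ} (p : ℕ) (A : KC R M m (p + 1)) (B : KC R M m p) :
    hp p (asm p A B) = B := by
  funext S
  show asm p A B _ = _
  rw [asm, dif_pos (Finset.mem_insert_self _ _)]
  refine congrArg B (Subtype.ext ?_)
  show down ((insert (Fin.last m) (up S.1)).erase (Fin.last m)) = S.1
  rw [Finset.erase_insert (last_not_mem_up _), down_up]

lemma asm_res_hp {m : ℕ} (p : ℕ) (f : KC R M (m + 1) (p + 1)) :
    asm p (res (p + 1) f) (hp p f) = f := by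
  funext T
  rw [asm]
  by_cases h : Fin.last m ∈ T.1
  · rw [dif_pos h]
    show f _ = _
    congr 1
    refine Subtype.ext ?_
    show insert (Fin.last m) (up (down (T.1.erase (Fin.last m)))) = T.1
    rw [up_down _ (Finset.notMem_erase _ _), Finset.insert_erase h]
  · rw [dif_neg h]
    show f _ = _
    congr 1
    exact Subtype.ext (up_down T.1 h)

lemma filter_up {m : ℕ} (S : Finset (Fin m)) (i : Fin m) :
    (up S).filter (· < Fin.castSucc i) = up (S.filter (· < i)) := by
  ext j
  rcases Fin.eq_castSucc_or_eq_last j with ⟨a, rfl⟩ | rfl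
  · simp [Fin.castSucc_lt_castSucc_iff]
  · simp only [Finset.mem_filter]
    constructor
    · rintro ⟨h1, h2⟩
      exact absurd h2 (not_lt.mpr (Fin.castSucc_lt_last i).le)
    · intro h
      exact absurd h (last_not_mem_up _)

lemma sign_up {m : ℕ} (S : Finset (Fin m)) (i : Fin m) :
    koszulSign (up S) (Fin.castSucc i) = koszulSign S i := by
  rw [koszulSign, koszulSign, filter_up, card_up]

lemma sign_insert_last {m : ℕ} (T : Finset (Fin (m + 1))) (i : Fin m) :
    koszulSign (insert (Fin.last m) T) (Fin.castSucc i) = koszulSign T (Fin.castSucc i) := by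
  rw [koszulSign, koszulSign, Finset.filter_insert,
    if_neg (not_lt.mpr (Fin.castSucc_lt_last i).le)]

lemma sign_last {m : ℕ} (S : Finset (Fin m)) :
    koszulSign (up S) (Fin.last m) = (-1 : ℤ) ^ S.card := by
  rw [koszulSign, Finset.filter_true_of_mem, card_up]
  intro j hj
  rcases Finset.mem_map.mp hj with ⟨a, _, rfl⟩
  exact Fin.castSucc_lt_last a

end DSeqAux
end

noncomputable section
namespace DSeqAux

open Finset

variable {R : Type u} [CommRing R] {M : Type v} [AddCommGroup M] [Module R M]

lemma kd_apply {n : ℕ} (x : Fin n → R) (j : ℕ) (f : KC R M n (j + 1))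
    (T : {s : Finset (Fin n) // s.card = j}) :
    kd R M x j f T = ∑ i : Fin n,
      if h : i ∈ T.val then 0
      else koszulSign T.val i •
        (x i • f ⟨insert i T.val, by rw [Finset.card_insert_of_notMem h, T.property]⟩) := rfl


lemma KC_congr {n j : ℕ} (f : KC R M n j) {s t : Finset (Fin n)} (hs : s.card = j)
    (ht : t.card = j) (h : s = t) : f ⟨s, hs⟩ = f ⟨t, ht⟩ := by
  subst h; rfl

lemma res_apply {m p : ℕ} (f : KC R M (m + 1) p) (s : Finset (Fin m)) (hs : s.card = p) :
    res p f ⟨s, hs⟩ = f ⟨up s, by rw [card_up, hs]⟩ := rfl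

lemma hp_apply {m p : ℕ} (f : KC R M (m + 1) (p + 1)) (s : Finset (Fin m)) (hs : s.card = p) :
    hp p f ⟨s, hs⟩ = f ⟨insert (Fin.last m) (up s), by
      rw [Finset.card_insert_of_notMem (last_not_mem_up _), card_up, hs]⟩ := rfl

lemma id1 {m : ℕ} (y : Fin (m + 1) → R) (p : ℕ) (f : KC R M (m + 1) (p + 1))
    (S : {s : Finset (Fin m) // s.card = p}) :
    res p (kd R M y p f) S =
      kd R M (y ∘ Fin.castSucc) p (res (p + 1) f) S +
        ((-1 : ℤ) ^ p) • (y (Fin.last m) • hp p f S) := by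
  show kd R M y p f ⟨up S.1, _⟩ = _
  rw [kd_apply, kd_apply, Fin.sum_univ_castSucc]
  congr 1
  · refine Finset.sum_congr rfl fun i _ => ?_
    by_cases hi : i ∈ S.1
    · rw [dif_pos ((mem_up S.1 i).mpr hi), dif_pos hi]
    · rw [dif_neg (fun hc => hi ((mem_up S.1 i).mp hc)), dif_neg hi, sign_up]
      rw [res_apply]
      congr 1
      exact congrArg (fun z => y i.castSucc • z) <| KC_congr f _ _
        (show insert i.castSucc (up S.1) = up (insert i S.1) by rw [up_insert])
  · rw [dif_neg (last_not_mem_up S.1)]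
    have hc : (up S.1).card = p := by rw [card_up, S.2]
    rw [show koszulSign (up S.1) (Fin.last m) = (-1 : ℤ) ^ p by rw [sign_last, S.2]]
    rfl

lemma id2 {m : ℕ} (y : Fin (m + 1) → R) (p : ℕ) (f : KC R M (m + 1) (p + 2))
    (S : {s : Finset (Fin m) // s.card = p}) :
    hp p (kd R M y (p + 1) f) S = kd R M (y ∘ Fin.castSucc) p (hp (p + 1) f) S := by
  show kd R M y (p + 1) f ⟨insert (Fin.last m) (up S.1), _⟩ = _
  rw [kd_apply, kd_apply, Fin.sum_univ_castSucc,
    dif_pos (Finset.mem_insert_self _ _), add_zero]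
  refine Finset.sum_congr rfl fun i _ => ?_
  have hmem : Fin.castSucc i ∈ insert (Fin.last m) (up S.1) ↔ i ∈ S.1 := by
    rw [Finset.mem_insert, mem_up]
    simp [Fin.ne_of_lt (Fin.castSucc_lt_last i)]
  by_cases hi : i ∈ S.1
  · rw [dif_pos (hmem.mpr hi), dif_pos hi]
  · rw [dif_neg (fun hc => hi (hmem.mp hc)), dif_neg hi, sign_insert_last, sign_up]
    rw [hp_apply]
    congr 1
    exact congrArg (fun z => y i.castSucc • z) <| KC_congr f _ _
      (show insert i.castSucc (insert (Fin.last m) (up S.1)) =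
          insert (Fin.last m) (up (insert i S.1)) by rw [up_insert, Finset.insert_comm])

end DSeqAux
end

noncomputable section
namespace DSeqAux

open Finset Pointwise

variable {R : Type u} [CommRing R] {M : Type v} [AddCommGroup M] [Module R M]

lemma priorIdeal_mono {n : ℕ} (x : Fin n → R) {k l : ℕ} (h : k ≤ l) :
    priorIdeal x k ≤ priorIdeal x l :=
  Ideal.span_mono (Set.image_mono fun j hj => lt_of_lt_of_le hj h)

lemma priorIdeal_succ {n : ℕ} (x : Fin n → R) (s : ℕ) (hs : s < n) :
    priorIdeal x (s + 1) = priorIdeal x s ⊔ Ideal.span {x ⟨s, hs⟩} := by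
  have hset : {k : Fin n | (k : ℕ) < s + 1} = {k : Fin n | (k : ℕ) < s} ∪ {⟨s, hs⟩} := by
    ext j
    simp only [Set.mem_setOf_eq, Set.mem_union, Set.mem_singleton_iff, Nat.lt_succ_iff_lt_or_eq,
      Fin.ext_iff]
  rw [priorIdeal, priorIdeal, hset, Set.image_union, Ideal.span_union, Set.image_singleton]

lemma span_range_eq_prior {n : ℕ} (x : Fin n → R) :
    Ideal.span (Set.range x) = priorIdeal x n := by
  have : {k : Fin n | (k : ℕ) < n} = Set.univ := Set.eq_univ_of_forall fun k => k.2
  rw [priorIdeal, this, Set.image_univ]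

lemma priorIdeal_castSucc {m : ℕ} (y : Fin (m + 1) → R) (k : ℕ) (hk : k ≤ m) :
    priorIdeal (y ∘ Fin.castSucc) k = priorIdeal y k := by
  unfold priorIdeal
  congr 1
  ext r
  constructor
  · rintro ⟨j, hj, rfl⟩
    exact ⟨Fin.castSucc j, hj, rfl⟩
  · rintro ⟨j, hj, rfl⟩
    have hjm : (j : ℕ) < m := lt_of_lt_of_le hj hk
    exact ⟨⟨(j : ℕ), hjm⟩, hj, congrArg y (Fin.ext rfl)⟩

lemma span_range_castSucc {m : ℕ} (y : Fin (m + 1) → R) :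
    Ideal.span (Set.range (y ∘ Fin.castSucc)) = priorIdeal y m := by
  unfold priorIdeal
  congr 1
  ext r
  constructor
  · rintro ⟨j, rfl⟩
    exact ⟨Fin.castSucc j, Fin.castSucc_lt_last j, rfl⟩
  · rintro ⟨j, hj, rfl⟩
    exact ⟨⟨(j : ℕ), hj⟩, congrArg y (Fin.ext rfl)⟩

lemma priorIdeal_firstk {n : ℕ} (x : Fin n → R) (i : ℕ) (h : i ≤ n) (k : ℕ) (hk : k ≤ i) :
    priorIdeal (firstk x i h) k = priorIdeal x k := by
  unfold priorIdeal firstk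
  congr 1
  ext r
  constructor
  · rintro ⟨j, hj, rfl⟩
    exact ⟨Fin.castLE h j, hj, rfl⟩
  · rintro ⟨j, hj, rfl⟩
    have hji : (j : ℕ) < i := lt_of_lt_of_le hj hk
    exact ⟨⟨(j : ℕ), hji⟩, hj, congrArg x (Fin.ext rfl)⟩

lemma sign_empty {n : ℕ} (i : Fin n) : koszulSign (∅ : Finset (Fin n)) i = 1 := by
  rw [koszulSign, Finset.filter_empty, Finset.card_empty, pow_zero]

/-- degree 0 surjectivity onto `(y')M` -/
lemma deg0 {m : ℕ} (y' : Fin m → R) (B : KC R M m 0)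
    (hB : B ⟨∅, rfl⟩ ∈ Ideal.span (Set.range y') • (⊤ : Submodule R M)) :
    ∃ v : KC R M m 1, kd R M y' 0 v = B := by
  classical
  let Φ : (Fin m → M) →ₗ[R] M :=
    { toFun := fun v => ∑ i, y' i • v i
      map_add' := by
        intro a b
        simp [Pi.add_apply, smul_add, Finset.sum_add_distrib]
      map_smul' := by
        intro r a
        simp only [RingHom.id_apply, Finset.smul_sum, Pi.smul_apply]
        exact Finset.sum_congr rfl fun i _ => (smul_comm _ _ _).symm }
  have hle : Ideal.span (Set.range y') • (⊤ : Submodule R M) ≤ LinearMap.range Φ := by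
    refine Submodule.smul_le.2 fun r hr mm _ => ?_
    induction hr using Submodule.span_induction with
    | mem r hrmem =>
      obtain ⟨i, rfl⟩ := hrmem
      refine ⟨Pi.single i mm, ?_⟩
      show (∑ j, y' j • Pi.single i mm j) = y' i • mm
      rw [Finset.sum_eq_single i]
      · rw [Pi.single_eq_same]
      · intro b _ hb
        rw [Pi.single_eq_of_ne hb, smul_zero]
      · intro hb
        exact absurd (Finset.mem_univ i) hb
    | zero => rw [zero_smul]; exact Submodule.zero_mem _
    | add a b _ _ ha hb => rw [add_smul]; exact Submodule.add_mem _ ha hb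
    | smul a b _ hb =>
      rw [smul_eq_mul, mul_smul]
      exact Submodule.smul_mem _ _ hb
  obtain ⟨v0, hv0⟩ := hle hB
  refine ⟨fun S => v0 (S.1.min' (Finset.card_pos.mp (by rw [S.2]; exact Nat.one_pos))), ?_⟩
  funext T
  have hT2 : T = ⟨∅, rfl⟩ := Subtype.ext (Finset.card_eq_zero.mp T.2)
  rw [hT2, kd_apply]
  rw [← hv0]
  refine Finset.sum_congr rfl fun i _ => ?_
  rw [dif_neg (Finset.notMem_empty i), sign_empty, one_smul]
  congr 1

/-- Huneke's colon intersection lemma -/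
lemma lemA {n : ℕ} (x : Fin n → R) (hx : IsDSeq M x) (k : Fin n) (a : M)
    (h1 : x k • a ∈ priorIdeal x (k : ℕ) • (⊤ : Submodule R M))
    (h2 : a ∈ Ideal.span (Set.range x) • (⊤ : Submodule R M)) :
    a ∈ priorIdeal x (k : ℕ) • (⊤ : Submodule R M) := by
  have hstep : ∀ j : Fin n, k ≤ j → x j • a ∈ priorIdeal x (k : ℕ) • (⊤ : Submodule R M) := by
    intro j hj
    have hcomap := hx k j hj
    have ha : a ∈ Submodule.comap (LinearMap.lsmul R M (x k * x j))
        (priorIdeal x (k : ℕ) • ⊤) := by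
      simp only [Submodule.mem_comap, LinearMap.lsmul_apply]
      rw [mul_comm, mul_smul]
      exact Submodule.smul_mem _ _ h1
    rw [hcomap] at ha
    simpa using ha
  have main : ∀ s : ℕ, (k : ℕ) + s ≤ n →
      a ∈ priorIdeal x ((k : ℕ) + s) • (⊤ : Submodule R M) →
      a ∈ priorIdeal x (k : ℕ) • (⊤ : Submodule R M) := by
    intro s
    induction s with
    | zero => intro _ h; simpa using h
    | succ t ih =>
      intro hle hmem
      have hlt : (k : ℕ) + t < n := by omega
      have hsum : (k : ℕ) + (t + 1) = ((k : ℕ) + t) + 1 := rfl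
      rw [hsum, priorIdeal_succ x ((k : ℕ) + t) hlt, Submodule.sup_smul,
        Submodule.ideal_span_singleton_smul] at hmem
      obtain ⟨b, hb, c, hc, hbc⟩ := Submodule.mem_sup.mp hmem
      obtain ⟨v, -, hv⟩ := Set.mem_smul_set.mp hc
      set j : Fin n := ⟨(k : ℕ) + t, hlt⟩ with hj
      have hkj : k ≤ j := by
        rw [Fin.le_def]
        show (k : ℕ) ≤ (k : ℕ) + t
        omega
      have hja : x j • a ∈ priorIdeal x ((k : ℕ) + t) • (⊤ : Submodule R M) :=
        Submodule.smul_mono_left (priorIdeal_mono x (Nat.le_add_right _ _)) (hstep j hkj)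
      have hx2 : x j • (x j • v) ∈ priorIdeal x ((k : ℕ) + t) • (⊤ : Submodule R M) := by
        have : x j • (x j • v) = x j • a - x j • b := by
          rw [← smul_sub, hv, ← hbc]
          congr 1
          abel
        rw [this]
        exact Submodule.sub_mem _ hja (Submodule.smul_mem _ _ hb)
      have hcomap := hx j j le_rfl
      have hv2 : v ∈ Submodule.comap (LinearMap.lsmul R M (x j * x j))
          (priorIdeal x (j : ℕ) • ⊤) := by
        simp only [Submodule.mem_comap, LinearMap.lsmul_apply]
        rw [mul_smul]
        exact hx2
      rw [hcomap] at hv2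
      have hcmem : c ∈ priorIdeal x ((k : ℕ) + t) • (⊤ : Submodule R M) := by
        rw [← hv]
        simpa using hv2
      exact ih (by omega) (by rw [← hbc]; exact Submodule.add_mem _ hb hcmem)
  rw [span_range_eq_prior] at h2
  have hkn : (k : ℕ) + (n - (k : ℕ)) = n := by omega
  exact main (n - (k : ℕ)) (by omega) (by rw [hkn]; exact h2)

end DSeqAux
end

noncomputable section
namespace DSeqAux

open Finset Pointwise

variable {R : Type u} [CommRing R] {M : Type v} [AddCommGroup M] [Module R M]

lemma claimD : ∀ (m : ℕ) (y : Fin m → R) (I : Ideal R),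
    (∀ i, y i ∈ I) →
    (∀ (k : Fin m) (a : M), y k • a ∈ priorIdeal y (k : ℕ) • (⊤ : Submodule R M) →
      a ∈ I • (⊤ : Submodule R M) → a ∈ priorIdeal y (k : ℕ) • (⊤ : Submodule R M)) →
    ∀ (p : ℕ) (f : KC R M m (p + 1)), kd R M y p f = 0 →
      (∀ T, f T ∈ I • (⊤ : Submodule R M)) →
      ∃ F : KC R M m (p + 2), kd R M y (p + 1) F = f := by
  intro m
  induction m with
  | zero =>
    intro y I _ _ p f _ _
    refine ⟨0, ?_⟩
    funext T
    exact absurd T.2 (by rw [Finset.eq_empty_of_isEmpty T.1]; simp)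
  | succ m ih =>
    intro y I hI hH2 p f hcyc hmem
    have hI' : ∀ i, (y ∘ Fin.castSucc) i ∈ I := fun i => hI _
    have hH2' : ∀ (k : Fin m) (a : M),
        (y ∘ Fin.castSucc) k • a ∈ priorIdeal (y ∘ Fin.castSucc) (k : ℕ) • (⊤ : Submodule R M) →
        a ∈ I • (⊤ : Submodule R M) →
        a ∈ priorIdeal (y ∘ Fin.castSucc) (k : ℕ) • (⊤ : Submodule R M) := by
      intro k a hk ha
      rw [priorIdeal_castSucc y _ (le_of_lt k.2)] at hk ⊢
      exact hH2 (Fin.castSucc k) a hk ha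
    have hgmem : ∀ S, res (p + 1) f S ∈ I • (⊤ : Submodule R M) := fun S => hmem _
    have hhmem : ∀ S, hp p f S ∈ I • (⊤ : Submodule R M) := fun S => hmem _
    have hid1 : ∀ S : {s : Finset (Fin m) // s.card = p},
        (0 : M) = kd R M (y ∘ Fin.castSucc) p (res (p + 1) f) S +
          ((-1 : ℤ) ^ p) • (y (Fin.last m) • hp p f S) := by
      intro S
      have h0 := id1 y p f S
      rw [hcyc] at h0
      exact h0
    have hv : ∃ v : KC R M m (p + 1), kd R M (y ∘ Fin.castSucc) p v = hp p f := by
      cases p with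
      | zero =>
        have hkdg : kd R M (y ∘ Fin.castSucc) 0 (res 1 f) ⟨∅, rfl⟩ ∈
            priorIdeal y m • (⊤ : Submodule R M) := by
          rw [kd_apply]
          refine Submodule.sum_mem _ fun i _ => ?_
          rw [dif_neg (Finset.notMem_empty i), sign_empty, one_smul]
          exact Submodule.smul_mem_smul (Ideal.subset_span ⟨Fin.castSucc i, i.2, rfl⟩) trivial
        have h0 := hid1 ⟨∅, rfl⟩
        rw [pow_zero, one_smul] at h0
        have hyh : y (Fin.last m) • hp 0 f ⟨∅, rfl⟩ ∈ priorIdeal y m • (⊤ : Submodule R M) := by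
          rw [eq_neg_of_add_eq_zero_right h0.symm]
          exact Submodule.neg_mem _ hkdg
        have hh0 : hp 0 f ⟨∅, rfl⟩ ∈ priorIdeal y m • (⊤ : Submodule R M) :=
          hH2 (Fin.last m) _ hyh (hhmem _)
        apply deg0 (y ∘ Fin.castSucc) (hp 0 f)
        rw [span_range_castSucc]
        exact hh0
      | succ q =>
        have hhcyc : kd R M (y ∘ Fin.castSucc) q (hp (q + 1) f) = 0 := by
          funext S
          have h2 := id2 y q f S
          rw [hcyc] at h2
          exact h2.symm
        exact ih (y ∘ Fin.castSucc) I hI' hH2' q (hp (q + 1) f) hhcyc hhmem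
    obtain ⟨v, hvv⟩ := hv
    have hwcyc : kd R M (y ∘ Fin.castSucc) p
        (res (p + 1) f + ((-1 : ℤ) ^ p) • (y (Fin.last m) • v)) = 0 := by
      funext S
      rw [map_add, map_zsmul, map_smul, hvv]
      simp only [Pi.add_apply, Pi.smul_apply, Pi.zero_apply]
      exact (hid1 S).symm
    have hwmem : ∀ S, (res (p + 1) f + ((-1 : ℤ) ^ p) • (y (Fin.last m) • v)) S ∈
        I • (⊤ : Submodule R M) := by
      intro S
      simp only [Pi.add_apply, Pi.smul_apply]
      refine Submodule.add_mem _ (hgmem S) ?_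
      exact Submodule.smul_of_tower_mem _ _ (Submodule.smul_mem_smul (hI _) trivial)
    obtain ⟨u, hu⟩ := ih (y ∘ Fin.castSucc) I hI' hH2' p _ hwcyc hwmem
    refine ⟨asm (p + 1) u v, ?_⟩
    have hres : res (p + 1) (kd R M y (p + 1) (asm (p + 1) u v)) = res (p + 1) f := by
      funext S
      rw [id1 y (p + 1) (asm (p + 1) u v) S, res_asm, hp_asm, hu]
      simp only [Pi.add_apply, Pi.smul_apply]
      have hz : ((-1 : ℤ) ^ p) • (y (Fin.last m) • v S) +
          ((-1 : ℤ) ^ (p + 1)) • (y (Fin.last m) • v S) = 0 := by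
        rw [← add_smul, show (-1 : ℤ) ^ p + (-1 : ℤ) ^ (p + 1) = 0 by ring, zero_smul]
      rw [add_assoc, hz, add_zero]
    have hhp : hp p (kd R M y (p + 1) (asm (p + 1) u v)) = hp p f := by
      funext S
      rw [id2 y p (asm (p + 1) u v) S, hp_asm, hvv]
    calc kd R M y (p + 1) (asm (p + 1) u v)
        = asm p (res (p + 1) (kd R M y (p + 1) (asm (p + 1) u v)))
            (hp p (kd R M y (p + 1) (asm (p + 1) u v))) := (asm_res_hp p _).symm
      _ = asm p (res (p + 1) f) (hp p f) := by rw [hres, hhp]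
      _ = f := asm_res_hp p f

end DSeqAux
end

theorem dSeq_isProperSeq (R : Type u) [CommRing R] [IsNoetherianRing R]
    (M : Type v) [AddCommGroup M] [Module R M] {n : ℕ} (x : Fin n → R)
    (hx : IsDSeq M x) : IsProperSeq M x := by
  intro i _ hi j h
  obtain ⟨z, rfl⟩ := Submodule.Quotient.mk_surjective _ h
  rw [← Submodule.Quotient.mk_smul, Submodule.Quotient.mk_eq_zero, Submodule.mem_comap]
  have H1 : ∀ k, firstk x i hi.le k ∈ Ideal.span (Set.range x) :=
    fun k => Ideal.subset_span ⟨_, rfl⟩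
  have H2 : ∀ (k : Fin i) (a : M),
      firstk x i hi.le k • a ∈ priorIdeal (firstk x i hi.le) (k : ℕ) • (⊤ : Submodule R M) →
      a ∈ Ideal.span (Set.range x) • (⊤ : Submodule R M) →
      a ∈ priorIdeal (firstk x i hi.le) (k : ℕ) • (⊤ : Submodule R M) := by
    intro k a hk ha
    rw [DSeqAux.priorIdeal_firstk x i hi.le (k : ℕ) (le_of_lt k.2)] at hk ⊢
    exact DSeqAux.lemA x hx (Fin.castLE hi.le k) a hk ha
  have hcyc : kd R M (firstk x i hi.le) j (x ⟨i, hi⟩ • (z : KC R M i (j + 1))) = 0 := by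
    rw [map_smul, LinearMap.mem_ker.mp z.2, smul_zero]
  have hmem : ∀ T, (x ⟨i, hi⟩ • (z : KC R M i (j + 1))) T ∈
      Ideal.span (Set.range x) • (⊤ : Submodule R M) := by
    intro T
    exact Submodule.smul_mem_smul (Ideal.subset_span ⟨_, rfl⟩) trivial
  obtain ⟨F, hF⟩ := DSeqAux.claimD i (firstk x i hi.le) (Ideal.span (Set.range x))
    H1 H2 j (x ⟨i, hi⟩ • (z : KC R M i (j + 1))) hcyc hmem
  exact ⟨F, hF⟩
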